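/- Let Z₁,…,Zₙ be independent real random variables, each bounded above by b > 0 and square-integrable, and let λ > 0. Then log E[exp(λ Σᵢ Zᵢ)] ≤ λ Σᵢ E[Zᵢ] + (λ²φ(λb)/2) Σᵢ E[Zᵢ²], where φ(u) = 2(e^u − 1 − u)/u², φ(0) = 1. -/

import Mathlib

/-!
Since `φ(u) = 2 ∫₀¹ (1 - t) e^{tu} dt`, the function `φ` is increasing and
`e^u = 1 + u + u² φ(u) / 2`; hence `e^u ≤ 1 + u + u² φ(c) / 2` whenever `u ≤ c`.
Applied to `u = λ Zᵢ ≤ λ b` and integrated, this gives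
`E[e^{λ Zᵢ}] ≤ 1 + λ E[Zᵢ] + λ² φ(λ b) E[Zᵢ²] / 2 ≤ exp(λ E[Zᵢ] + λ² φ(λ b) E[Zᵢ²] / 2)`,
and by independence the cumulant generating function of the sum is the sum of those of the `Zᵢ`.
-/

open MeasureTheory ProbabilityTheory Real

noncomputable def phi (u : ℝ) : ℝ := if u = 0 then 1 else 2 * (Real.exp u - 1 - u) / u ^ 2

lemma sq_mul_integral_one_sub_mul_exp (u : ℝ) :
    u ^ 2 * ∫ t in (0 : ℝ)..1, (1 - t) * exp (t * u) = exp u - 1 - u := by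
  rcases eq_or_ne u 0 with rfl | hu
  · simp
  have hderiv : ∀ t ∈ Set.uIcc (0 : ℝ) 1,
      HasDerivAt (fun t => exp (t * u) * ((1 - t) / u + 1 / u ^ 2))
        ((1 - t) * exp (t * u)) t := by
    intro t _
    have hexp : HasDerivAt (fun t : ℝ => exp (t * u)) (exp (t * u) * u) t := by
      simpa using ((hasDerivAt_id t).mul_const u).exp
    have hlin : HasDerivAt (fun t : ℝ => (1 - t) / u + 1 / u ^ 2) (-1 / u) t :=
      (((hasDerivAt_id t).const_sub 1).div_const u).add_const (1 / u ^ 2)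
    refine (hexp.mul hlin).congr_deriv ?_
    field_simp
    ring
  rw [intervalIntegral.integral_eq_sub_of_hasDerivAt hderiv
    ((by fun_prop : Continuous fun t : ℝ => (1 - t) * exp (t * u)).intervalIntegrable 0 1)]
  field_simp
  rw [mul_zero, exp_zero]
  ring

lemma phi_eq_two_mul_integral (u : ℝ) :
    phi u = 2 * ∫ t in (0 : ℝ)..1, (1 - t) * exp (t * u) := by
  rcases eq_or_ne u 0 with rfl | hu
  · simp only [phi, if_true, mul_zero, exp_zero, mul_one]
    rw [intervalIntegral.integral_sub intervalIntegrable_const intervalIntegral.intervalIntegrable_id,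
      integral_id]
    norm_num
  · rw [phi, if_neg hu, ← sq_mul_integral_one_sub_mul_exp u]
    field_simp

lemma exp_eq_one_add_add_sq_mul_phi (u : ℝ) : exp u = 1 + u + u ^ 2 * phi u / 2 := by
  rw [phi_eq_two_mul_integral]
  linarith [sq_mul_integral_one_sub_mul_exp u]

lemma phi_monotone : Monotone phi := by
  intro u c h
  rw [phi_eq_two_mul_integral, phi_eq_two_mul_integral]
  gcongr
  refine intervalIntegral.integral_mono_on zero_le_one
    ((by fun_prop : Continuous fun t : ℝ => (1 - t) * exp (t * u)).intervalIntegrable 0 1)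
    ((by fun_prop : Continuous fun t : ℝ => (1 - t) * exp (t * c)).intervalIntegrable 0 1)
    fun t ht =>
      mul_le_mul_of_nonneg_left (exp_le_exp.2 (mul_le_mul_of_nonneg_left h ht.1)) (sub_nonneg.2 ht.2)

lemma exp_le_one_add_add_sq_mul_phi {u c : ℝ} (h : u ≤ c) :
    exp u ≤ 1 + u + u ^ 2 * phi c / 2 := by
  rw [exp_eq_one_add_add_sq_mul_phi u]
  gcongr
  exact phi_monotone h

section

variable {Ω : Type*} [MeasurableSpace Ω] {μ : Measure Ω} [IsProbabilityMeasure μ]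
  {X : Ω → ℝ} {b t : ℝ}

lemma mgf_le_exp_of_ae_le (hX : AEStronglyMeasurable X μ) (ht : 0 ≤ t)
    (hbd : ∀ᵐ ω ∂μ, X ω ≤ b) (hX2 : Integrable (fun ω => X ω ^ 2) μ) :
    mgf X μ t ≤ exp (t * μ[X] + t ^ 2 * phi (t * b) / 2 * ∫ ω, X ω ^ 2 ∂μ) := by
  have hX1 : Integrable X μ :=
    ((memLp_two_iff_integrable_sq hX).2 hX2).integrable one_le_two
  have hlin : Integrable (fun ω => 1 + t * X ω) μ := (integrable_const 1).add (hX1.const_mul t)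
  have hquad : Integrable (fun ω => 1 + t * X ω + t ^ 2 * phi (t * b) / 2 * X ω ^ 2) μ :=
    hlin.add (hX2.const_mul _)
  have hpointwise : ∀ᵐ ω ∂μ, exp (t * X ω) ≤ 1 + t * X ω + t ^ 2 * phi (t * b) / 2 * X ω ^ 2 := by
    filter_upwards [hbd] with ω hω
    convert exp_le_one_add_add_sq_mul_phi (mul_le_mul_of_nonneg_left hω ht) using 1
    ring
  calc mgf X μ t
      ≤ ∫ ω, (1 + t * X ω + t ^ 2 * phi (t * b) / 2 * X ω ^ 2) ∂μ :=
        integral_mono_of_nonneg (.of_forall fun ω => (exp_pos _).le) hquad hpointwise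
    _ = 1 + (t * μ[X] + t ^ 2 * phi (t * b) / 2 * ∫ ω, X ω ^ 2 ∂μ) := by
        rw [integral_add hlin (hX2.const_mul _),
          integral_add (integrable_const 1) (hX1.const_mul t), integral_const,
          integral_const_mul, integral_const_mul, probReal_univ, smul_eq_mul, one_mul, add_assoc]
    _ ≤ _ := by linarith [add_one_le_exp (t * μ[X] + t ^ 2 * phi (t * b) / 2 * ∫ ω, X ω ^ 2 ∂μ)]

lemma cgf_le_of_ae_le (hX : AEMeasurable X μ) (ht : 0 ≤ t)
    (hbd : ∀ᵐ ω ∂μ, X ω ≤ b) (hX2 : Integrable (fun ω => X ω ^ 2) μ) :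
    cgf X μ t ≤ t * μ[X] + t ^ 2 * phi (t * b) / 2 * ∫ ω, X ω ^ 2 ∂μ :=
  (log_le_iff_le_exp (mgf_pos (integrable_exp_mul_of_le t b ht hX hbd))).2
    (mgf_le_exp_of_ae_le hX.aestronglyMeasurable ht hbd hX2)

end

theorem stmt19_general {Ω : Type*} [MeasurableSpace Ω] (μ : Measure Ω) [IsProbabilityMeasure μ]
    (n : ℕ) (Z : Fin n → Ω → ℝ)
    (hmeas : ∀ i, Measurable (Z i))
    (hindep : iIndepFun Z μ)
    (b : ℝ) (hbd : ∀ i, ∀ᵐ ω ∂μ, Z i ω ≤ b)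
    (hint2 : ∀ i, Integrable (fun ω => (Z i ω) ^ 2) μ)
    (lam : ℝ) (hlam : 0 < lam) :
    Real.log (∫ ω, Real.exp (lam * ∑ i, Z i ω) ∂μ) ≤
      lam * ∑ i, ∫ ω, Z i ω ∂μ +
        lam ^ 2 * phi (lam * b) / 2 * ∑ i, ∫ ω, (Z i ω) ^ 2 ∂μ := by
  have hcgf : Real.log (∫ ω, Real.exp (lam * ∑ i, Z i ω) ∂μ) = ∑ i, cgf (Z i) μ lam := by
    rw [← hindep.cgf_sum hmeas fun i _ =>
      integrable_exp_mul_of_le lam b hlam.le (hmeas i).aemeasurable (hbd i)]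
    simp only [cgf, mgf, Finset.sum_apply]
  calc Real.log (∫ ω, Real.exp (lam * ∑ i, Z i ω) ∂μ)
      ≤ ∑ i, (lam * ∫ ω, Z i ω ∂μ + lam ^ 2 * phi (lam * b) / 2 * ∫ ω, Z i ω ^ 2 ∂μ) :=
        hcgf ▸ Finset.sum_le_sum fun i _ =>
          cgf_le_of_ae_le (hmeas i).aemeasurable hlam.le (hbd i) (hint2 i)
    _ = _ := by rw [Finset.sum_add_distrib, ← Finset.mul_sum, ← Finset.mul_sum]

/-- For independent random variables `Z₁,…,Zₙ` bounded above by `b > 0` and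
square-integrable, and `λ > 0`:
`log E[exp(λΣZᵢ)] ≤ λΣE[Zᵢ] + (λ²φ(λb)/2)ΣE[Zᵢ²]`. -/
theorem stmt19 {Ω : Type*} [MeasurableSpace Ω] (μ : Measure Ω) [IsProbabilityMeasure μ]
    (n : ℕ) (Z : Fin n → Ω → ℝ)
    (hmeas : ∀ i, Measurable (Z i))
    (hindep : iIndepFun Z μ)
    (b : ℝ) (hb : 0 < b) (hbd : ∀ i, ∀ᵐ ω ∂μ, Z i ω ≤ b)
    (hint2 : ∀ i, Integrable (fun ω => (Z i ω) ^ 2) μ)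
    (lam : ℝ) (hlam : 0 < lam) :
    Real.log (∫ ω, Real.exp (lam * ∑ i, Z i ω) ∂μ) ≤
      lam * ∑ i, ∫ ω, Z i ω ∂μ +
        lam ^ 2 * phi (lam * b) / 2 * ∑ i, ∫ ω, (Z i ω) ^ 2 ∂μ :=
  stmt19_general μ n Z hmeas hindep b hbd hint2 lam hlam
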